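/- (Equivalence of the velocity and momentum formulations.) Let G = (V,E) be a finite, connected, undirected graph with no self-loops, V = {1,…,N}, N ≥ 2, all edge weights equal to 1, let ρ^a, ρ^b ∈ P(G), Σ ∈ ℝ^N, and let w : [0,1] → ℝ be continuous piecewise linear. Then the infimum of (1/2)∫₀¹ ⟨v(t), v(t)⟩_{θ(ρ(t))} dt over all pairs (ρ, v) with ρ : [0,1] → P(G) absolutely continuous, v : [0,1] → ℝ^{N×N} measurable with each v(t) skew-symmetric and supported on E and ∫₀¹⟨v,v⟩_{θ(ρ)}dt < ∞, satisfying ρ(0) = ρ^a, ρ(1) = ρ^b and, for a.e. t and every i, ρ̇_i(t) − ∑_{j∈N(i)} v_ij(t) θ_ij(ρ(t)) + ∑_{j∈N(i)} (Σ_j − Σ_i) θ_ij(ρ(t)) ẇ(t) = 0, is equal to the infimum of A(ρ, m) over (ρ, m) ∈ C_F(ρ^a, ρ^b). -/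

import Mathlib

open scoped BigOperators ENNReal
open MeasureTheory

noncomputable section

/-- Density-dependent edge weight `θ_ij(ρ) = (ρ_i + ρ_j)/2`. -/
def thetaA {N : ℕ} (ρ : Fin N → ℝ) (i j : Fin N) : ℝ := (ρ i + ρ j) / 2

/-- The cost function `L : ℝ × ℝ → [0,∞]`, `L(x,y) = y²/x` for `x > 0`,
`L(0,0) = 0`, and `L(x,y) = ∞` otherwise. -/
def Lcost (x y : ℝ) : ℝ≥0∞ :=
  if 0 < x then ENNReal.ofReal (y ^ 2 / x)
  else if x = 0 ∧ y = 0 then 0 else ⊤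

/-- Membership in the probability simplex `P(G)`. -/
def ProbVec {N : ℕ} (ρ : Fin N → ℝ) : Prop := (∀ i, 0 ≤ ρ i) ∧ ∑ i, ρ i = 1

/-- A vector field on the graph: a skew-symmetric matrix supported on edges. -/
def VecField {N : ℕ} (E : Fin N → Fin N → Prop) (m : Fin N → Fin N → ℝ) : Prop :=
  (∀ i j, m i j = - m j i) ∧ (∀ i j, ¬ E i j → m i j = 0)

/-- `w` is continuous and piecewise linear on `[0,1]` with a.e. derivative `wd`:
there is a partition `0 = t₀ < t₁ < ⋯ = 1` on whose pieces `w` is affine with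
slope `c k`, and `wd` equals `c k` on `[t_k, t_{k+1})`. -/
def IsPWL (w wd : ℝ → ℝ) : Prop :=
  ∃ (K : ℕ) (t : Fin (K + 2) → ℝ) (c : Fin (K + 1) → ℝ),
    StrictMono t ∧ t 0 = 0 ∧ t (Fin.last (K + 1)) = 1 ∧
    (∀ k : Fin (K + 1), ∀ s ∈ Set.Icc (t k.castSucc) (t k.succ),
      w s = w (t k.castSucc) + c k * (s - t k.castSucc)) ∧
    (∀ k : Fin (K + 1), ∀ s ∈ Set.Ico (t k.castSucc) (t k.succ), wd s = c k)

/-- The action `A(ρ,m) = ∫₀¹ (1/4) ∑_{(i,j)∈E} L(θ_ij(ρ(t)), m_ij(t)) dt`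
(sum over ordered pairs), valued in `[0,∞]`. -/
def action {N : ℕ} (E : Fin N → Fin N → Prop) [DecidableRel E]
    (ρ : ℝ → Fin N → ℝ) (m : ℝ → Fin N → Fin N → ℝ) : ℝ≥0∞ :=
  ∫⁻ t in Set.Icc (0 : ℝ) 1,
    (1 / 4) * ∑ i, ∑ j, (if E i j then Lcost (thetaA (ρ t) i j) (m t i j) else 0)

/-- The feasible set `C_F(ρ^a,ρ^b)` of the Wong–Zakai perturbed optimal control
problem: `ρ` is an absolutely continuous curve in `P(G)` joining `ρ^a` to `ρ^b`,
`m` is an `L²` field of skew-symmetric matrices supported on edges, and for a.e. `t`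
and all `i`: `ρ̇_i + ∑_{j∈N(i)} m_ij + ∑_{j∈N(i)} (Σ_j − Σ_i) θ_ij(ρ) ẇ = 0`
(stated in integrated form). -/
def Feasible {N : ℕ} (E : Fin N → Fin N → Prop) [DecidableRel E]
    (Sg : Fin N → ℝ) (wd : ℝ → ℝ) (ρa ρb : Fin N → ℝ)
    (ρ : ℝ → Fin N → ℝ) (m : ℝ → Fin N → Fin N → ℝ) : Prop :=
  ContinuousOn ρ (Set.Icc 0 1) ∧
  (∀ t ∈ Set.Icc (0 : ℝ) 1, ProbVec (ρ t)) ∧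
  ρ 0 = ρa ∧ ρ 1 = ρb ∧
  (∀ t, VecField E (m t)) ∧
  (∀ i j, MemLp (fun t => m t i j) 2 (volume.restrict (Set.Icc (0 : ℝ) 1))) ∧
  (∀ i, IntervalIntegrable
    (fun s => ∑ j, (if E i j then m s i j + (Sg j - Sg i) * thetaA (ρ s) i j * wd s else 0))
    volume 0 1) ∧
  (∀ i, ∀ t ∈ Set.Icc (0 : ℝ) 1,
    ρ t i = ρa i - ∫ s in (0 : ℝ)..t,
      ∑ j, (if E i j then m s i j + (Sg j - Sg i) * thetaA (ρ s) i j * wd s else 0))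

/-- The kinetic energy functional `(1/2)∫₀¹ ⟨v(t),v(t)⟩_{θ(ρ(t))} dt` of a
velocity field, valued in `[0,∞]`. -/
def energyV {N : ℕ} (E : Fin N → Fin N → Prop) [DecidableRel E]
    (ρ : ℝ → Fin N → ℝ) (v : ℝ → Fin N → Fin N → ℝ) : ℝ≥0∞ :=
  ∫⁻ t in Set.Icc (0 : ℝ) 1,
    ENNReal.ofReal ((1 / 2) *
      ((1 / 2) * ∑ i, ∑ j, (if E i j then (v t i j) ^ 2 * thetaA (ρ t) i j else 0)))

/-- The feasible set of the velocity formulation: `ρ` is an absolutely continuous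
curve in `P(G)` joining `ρ^a` to `ρ^b`, `v` a measurable field of skew-symmetric
matrices supported on edges with finite kinetic energy, and for a.e. `t` and all `i`:
`ρ̇_i − ∑_{j∈N(i)} v_ij θ_ij(ρ) + ∑_{j∈N(i)} (Σ_j − Σ_i) θ_ij(ρ) ẇ = 0`
(stated in integrated form). -/
def VFeasible {N : ℕ} (E : Fin N → Fin N → Prop) [DecidableRel E]
    (Sg : Fin N → ℝ) (wd : ℝ → ℝ) (ρa ρb : Fin N → ℝ)
    (ρ : ℝ → Fin N → ℝ) (v : ℝ → Fin N → Fin N → ℝ) : Prop :=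
  ContinuousOn ρ (Set.Icc 0 1) ∧
  (∀ t ∈ Set.Icc (0 : ℝ) 1, ProbVec (ρ t)) ∧
  ρ 0 = ρa ∧ ρ 1 = ρb ∧
  (∀ t, VecField E (v t)) ∧
  (∀ i j, AEStronglyMeasurable (fun t => v t i j) (volume.restrict (Set.Icc (0 : ℝ) 1))) ∧
  energyV E ρ v < ⊤ ∧
  (∀ i, IntervalIntegrable
    (fun s => ∑ j, (if E i j then (v s i j - (Sg j - Sg i) * wd s) * thetaA (ρ s) i j else 0))
    volume 0 1) ∧
  (∀ i, ∀ t ∈ Set.Icc (0 : ℝ) 1,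
    ρ t i = ρa i + ∫ s in (0 : ℝ)..t,
      ∑ j, (if E i j then (v s i j - (Sg j - Sg i) * wd s) * thetaA (ρ s) i j else 0))

/-!
The substitution `m = -θ(ρ) v` turns the continuity equation of the velocity formulation into
that of the momentum formulation, and `L(θ, -θ v) = θ v²` carries the kinetic energy onto the
action, so the momentum infimum is at most the velocity one. Conversely, a momentum field of
finite action vanishes a.e. where `θ(ρ)` does, so `v = -m / θ(ρ)` recovers `m = -θ(ρ) v` a.e.;
its energy is at most the action, since `L(θ, m) ≥ θ (m / θ)²`.
-/

lemma memLp_two_of_ofReal_sq_le {α : Type*} [MeasurableSpace α] {μ : Measure α} {g : α → ℝ}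
    {F : α → ℝ≥0∞} (hg : AEStronglyMeasurable g μ) (hF : ∫⁻ a, F a ∂μ ≠ ⊤)
    (hle : ∀ᵐ a ∂μ, ENNReal.ofReal (g a ^ 2) ≤ F a) : MemLp g 2 μ := by
  rw [memLp_two_iff_integrable_sq hg]
  refine ⟨hg.pow 2, ?_⟩
  rw [hasFiniteIntegral_iff_ofReal (ae_of_all _ fun a => sq_nonneg _)]
  exact (lintegral_mono_ae hle).trans_lt hF.lt_top

lemma ae_restrict_uIoc_of_ae_restrict_Icc {p : ℝ → Prop} {a b t : ℝ} (ht : t ∈ Set.Icc a b)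
    (h : ∀ᵐ s ∂volume.restrict (Set.Icc a b), p s) : ∀ᵐ s ∂volume.restrict (Set.uIoc a t), p s :=
  ae_restrict_of_ae_restrict_of_subset
    ((Set.uIoc_of_le ht.1).trans_subset
      (Set.Ioc_subset_Icc_self.trans (Set.Icc_subset_Icc_right ht.2))) h

lemma Lcost_neg_mul_self {θ : ℝ} (hθ : 0 ≤ θ) (v : ℝ) :
    Lcost θ (-(v * θ)) = ENNReal.ofReal (v ^ 2 * θ) := by
  rcases hθ.lt_or_eq with hθ | rfl
  · rw [Lcost, if_pos hθ]
    congr 1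
    field_simp
  · simp [Lcost]

lemma ofReal_sq_neg_div_mul_le_Lcost {θ : ℝ} (hθ : 0 ≤ θ) (m : ℝ) :
    ENNReal.ofReal ((-m / θ) ^ 2 * θ) ≤ Lcost θ m := by
  rcases hθ.lt_or_eq with hθ | rfl
  · rw [Lcost, if_pos hθ]
    exact le_of_eq (by congr 1; field_simp)
  · simp

lemma pos_or_eq_zero_of_Lcost_ne_top {θ m : ℝ} (hθ : 0 ≤ θ) (h : Lcost θ m ≠ ⊤) :
    0 < θ ∨ m = 0 := by
  by_contra! hbad
  obtain rfl : θ = 0 := le_antisymm hbad.1 hθ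
  simp [Lcost, hbad.2] at h

lemma measurable_Lcost : Measurable (Function.uncurry Lcost) := by
  refine Measurable.ite (measurableSet_lt measurable_const measurable_fst)
    ((measurable_snd.pow_const 2).div measurable_fst).ennreal_ofReal
    (Measurable.ite ?_ measurable_const measurable_const)
  exact (measurable_fst (measurableSet_singleton 0)).inter
    (measurable_snd (measurableSet_singleton 0))

lemma neg_neg_div_mul_cancel_of_pos_or_eq_zero {θ m : ℝ} (h : 0 < θ ∨ m = 0) :
    -(-m / θ * θ) = m := by
  rcases h with hθ | rfl
  · field_simp
  · simp

section Graph

variable {N : ℕ}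

lemma thetaA_comm (ρ : Fin N → ℝ) (i j : Fin N) : thetaA ρ i j = thetaA ρ j i := by
  simp only [thetaA, add_comm]

lemma ProbVec.le_one {ρ : Fin N → ℝ} (h : ProbVec ρ) (i : Fin N) : ρ i ≤ 1 :=
  h.2 ▸ Finset.single_le_sum (fun k _ => h.1 k) (Finset.mem_univ i)

lemma ProbVec.thetaA_nonneg {ρ : Fin N → ℝ} (h : ProbVec ρ) (i j : Fin N) :
    0 ≤ thetaA ρ i j := by
  have := h.1 i; have := h.1 j; simp only [thetaA]; linarith

lemma ProbVec.thetaA_le_one {ρ : Fin N → ℝ} (h : ProbVec ρ) (i j : Fin N) :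
    thetaA ρ i j ≤ 1 := by
  have := h.le_one i; have := h.le_one j; simp only [thetaA]; linarith

lemma ContinuousOn.thetaA {s : Set ℝ} {ρ : ℝ → Fin N → ℝ} (hρ : ContinuousOn ρ s)
    (i j : Fin N) : ContinuousOn (fun t => thetaA (ρ t) i j) s :=
  (((continuous_apply i).comp_continuousOn hρ).add
    ((continuous_apply j).comp_continuousOn hρ)).div_const 2

def momentumOf (ρ : ℝ → Fin N → ℝ) (v : ℝ → Fin N → Fin N → ℝ) : ℝ → Fin N → Fin N → ℝ :=
  fun t i j => -(v t i j * thetaA (ρ t) i j)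

-- Where `θ(ρ)` vanishes, division by zero makes the velocity `0`.
def velocityOf (ρ : ℝ → Fin N → ℝ) (m : ℝ → Fin N → Fin N → ℝ) : ℝ → Fin N → Fin N → ℝ :=
  fun t i j => -m t i j / thetaA (ρ t) i j

variable {E : Fin N → Fin N → Prop}

lemma VecField.momentumOf {ρ : ℝ → Fin N → ℝ} {v : ℝ → Fin N → Fin N → ℝ} {t : ℝ}
    (hv : VecField E (v t)) : VecField E (momentumOf ρ v t) := by
  refine ⟨fun i j => ?_, fun i j hij => ?_⟩
  · simp only [_root_.momentumOf, hv.1 i j, thetaA_comm _ i j]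
    ring
  · simp [_root_.momentumOf, hv.2 i j hij]

lemma VecField.velocityOf {ρ : ℝ → Fin N → ℝ} {m : ℝ → Fin N → Fin N → ℝ} {t : ℝ}
    (hm : VecField E (m t)) : VecField E (velocityOf ρ m t) := by
  refine ⟨fun i j => ?_, fun i j hij => ?_⟩
  · simp only [_root_.velocityOf, hm.1 i j, thetaA_comm _ i j]
    ring
  · simp [_root_.velocityOf, hm.2 i j hij]

variable [DecidableRel E]

lemma ofReal_energy_integrand {f : Fin N → Fin N → ℝ} (hf : ∀ i j, E i j → 0 ≤ f i j) :
    ENNReal.ofReal ((1 / 2) * ((1 / 2) * ∑ i, ∑ j, if E i j then f i j else 0))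
      = (1 / 4 : ℝ≥0∞) * ∑ i, ∑ j, if E i j then ENNReal.ofReal (f i j) else 0 := by
  have hnn : ∀ i j, 0 ≤ if E i j then f i j else 0 := fun i j => by
    split_ifs with h
    exacts [hf i j h, le_rfl]
  rw [← mul_assoc, ENNReal.ofReal_mul (by norm_num),
    ENNReal.ofReal_sum_of_nonneg fun i _ => Finset.sum_nonneg fun j _ => hnn i j]
  congr 1
  · norm_num [ENNReal.ofReal_div_of_pos]
  · refine Finset.sum_congr rfl fun i _ => ?_
    rw [ENNReal.ofReal_sum_of_nonneg fun j _ => hnn i j]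
    exact Finset.sum_congr rfl fun j _ => by split_ifs <;> simp

lemma le_four_mul_energy_integrand {f : Fin N → Fin N → ℝ} (hf : ∀ i j, E i j → 0 ≤ f i j)
    {i j : Fin N} (hij : E i j) :
    f i j ≤ 4 * ((1 / 2) * ((1 / 2) * ∑ i, ∑ j, if E i j then f i j else 0)) := by
  have hnn : ∀ i j, 0 ≤ if E i j then f i j else 0 := fun i j => by
    split_ifs with h
    exacts [hf i j h, le_rfl]
  calc f i j = if E i j then f i j else 0 := (if_pos hij).symm
    _ ≤ ∑ j', if E i j' then f i j' else 0 :=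
        Finset.single_le_sum (f := fun j' => if E i j' then f i j' else 0)
          (fun j' _ => hnn i j') (Finset.mem_univ j)
    _ ≤ ∑ i', ∑ j', if E i' j' then f i' j' else 0 :=
        Finset.single_le_sum (f := fun i' => ∑ j', if E i' j' then f i' j' else 0)
          (fun i' _ => Finset.sum_nonneg fun j' _ => hnn i' j') (Finset.mem_univ i)
    _ = _ := by ring

lemma action_momentumOf {ρ : ℝ → Fin N → ℝ} (hρ : ∀ t ∈ Set.Icc (0 : ℝ) 1, ProbVec (ρ t))
    (v : ℝ → Fin N → Fin N → ℝ) : action E ρ (momentumOf ρ v) = energyV E ρ v := by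
  refine setLIntegral_congr_fun measurableSet_Icc fun t ht => ?_
  rw [ofReal_energy_integrand fun i j _ => mul_nonneg (sq_nonneg _) ((hρ t ht).thetaA_nonneg i j)]
  simp only [momentumOf, Lcost_neg_mul_self ((hρ t ht).thetaA_nonneg _ _)]

lemma energyV_velocityOf_le {ρ : ℝ → Fin N → ℝ} (hρ : ∀ t ∈ Set.Icc (0 : ℝ) 1, ProbVec (ρ t))
    (m : ℝ → Fin N → Fin N → ℝ) : energyV E ρ (velocityOf ρ m) ≤ action E ρ m := by
  refine setLIntegral_mono_ae' measurableSet_Icc (ae_of_all _ fun t ht => ?_)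
  rw [ofReal_energy_integrand fun i j _ => mul_nonneg (sq_nonneg _) ((hρ t ht).thetaA_nonneg i j)]
  gcongr with i _ j _
  split_ifs
  exacts [ofReal_sq_neg_div_mul_le_Lcost ((hρ t ht).thetaA_nonneg i j) _, le_rfl]

def momentumFlux (E : Fin N → Fin N → Prop) [DecidableRel E] (Sg : Fin N → ℝ) (wd : ℝ → ℝ)
    (ρ : ℝ → Fin N → ℝ) (m : ℝ → Fin N → Fin N → ℝ) (s : ℝ) (i : Fin N) : ℝ :=
  ∑ j, if E i j then m s i j + (Sg j - Sg i) * thetaA (ρ s) i j * wd s else 0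

def velocityFlux (E : Fin N → Fin N → Prop) [DecidableRel E] (Sg : Fin N → ℝ) (wd : ℝ → ℝ)
    (ρ : ℝ → Fin N → ℝ) (v : ℝ → Fin N → Fin N → ℝ) (s : ℝ) (i : Fin N) : ℝ :=
  ∑ j, if E i j then (v s i j - (Sg j - Sg i) * wd s) * thetaA (ρ s) i j else 0

variable {Sg : Fin N → ℝ} {wd : ℝ → ℝ} {ρa ρb : Fin N → ℝ} {ρ : ℝ → Fin N → ℝ}

lemma momentumFlux_eq_neg_velocityFlux {m v : ℝ → Fin N → Fin N → ℝ} {s : ℝ} {i : Fin N}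
    (hmv : ∀ j, E i j → m s i j = -(v s i j * thetaA (ρ s) i j)) :
    momentumFlux E Sg wd ρ m s i = -velocityFlux E Sg wd ρ v s i := by
  rw [momentumFlux, velocityFlux, ← Finset.sum_neg_distrib]
  refine Finset.sum_congr rfl fun j _ => ?_
  split_ifs with hij
  · rw [hmv j hij]; ring
  · simp

lemma intervalIntegrable_momentumFlux_iff {m v : ℝ → Fin N → Fin N → ℝ}
    (hmv : ∀ᵐ t ∂volume.restrict (Set.Icc (0 : ℝ) 1),
      ∀ i j, E i j → m t i j = -(v t i j * thetaA (ρ t) i j)) (i : Fin N) :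
    IntervalIntegrable (momentumFlux E Sg wd ρ m · i) volume 0 1 ↔
      IntervalIntegrable (velocityFlux E Sg wd ρ v · i) volume 0 1 := by
  rw [intervalIntegrable_congr_ae (ae_restrict_uIoc_of_ae_restrict_Icc (b := 1)
    ⟨zero_le_one, le_rfl⟩ (hmv.mono fun t ht => momentumFlux_eq_neg_velocityFlux (ht i)))]
  exact ⟨fun h => by simpa only [Pi.neg_def, neg_neg] using h.neg, IntervalIntegrable.neg⟩

lemma momentumFlux_continuityEq_iff {m v : ℝ → Fin N → Fin N → ℝ}
    (hmv : ∀ᵐ t ∂volume.restrict (Set.Icc (0 : ℝ) 1),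
      ∀ i j, E i j → m t i j = -(v t i j * thetaA (ρ t) i j)) (i : Fin N) :
    (∀ t ∈ Set.Icc (0 : ℝ) 1, ρ t i = ρa i - ∫ s in (0 : ℝ)..t, momentumFlux E Sg wd ρ m s i) ↔
      ∀ t ∈ Set.Icc (0 : ℝ) 1, ρ t i = ρa i + ∫ s in (0 : ℝ)..t, velocityFlux E Sg wd ρ v s i := by
  refine forall₂_congr fun t ht => ?_
  rw [intervalIntegral.integral_congr_ae_restrict (ae_restrict_uIoc_of_ae_restrict_Icc ht
      (hmv.mono fun t ht => momentumFlux_eq_neg_velocityFlux (ht i))),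
    intervalIntegral.integral_neg, sub_neg_eq_add]

lemma VFeasible.memLp_momentumOf {v : ℝ → Fin N → Fin N → ℝ}
    (hp : VFeasible E Sg wd ρa ρb ρ v) (i j : Fin N) :
    MemLp (fun t => momentumOf ρ v t i j) 2 (volume.restrict (Set.Icc (0 : ℝ) 1)) := by
  obtain ⟨hc, hprob, -, -, hvf, hmeas, hfin, -, -⟩ := hp
  have hθ : AEStronglyMeasurable (fun t => thetaA (ρ t) i j)
      (volume.restrict (Set.Icc (0 : ℝ) 1)) :=
    (hc.thetaA i j).aestronglyMeasurable measurableSet_Icc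
  refine memLp_two_of_ofReal_sq_le ((hmeas i j).mul hθ).neg
    (F := fun t => 4 * ENNReal.ofReal ((1 / 2) * ((1 / 2) *
      ∑ i, ∑ j, if E i j then v t i j ^ 2 * thetaA (ρ t) i j else 0))) ?_ ?_
  · rw [lintegral_const_mul' _ _ (by norm_num)]
    exact ENNReal.mul_ne_top (by norm_num) hfin.ne
  refine (ae_restrict_iff' measurableSet_Icc).2 (ae_of_all _ fun t ht => ?_)
  by_cases hij : E i j
  · have h0 := (hprob t ht).thetaA_nonneg i j
    have h1 := (hprob t ht).thetaA_le_one i j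
    rw [← ENNReal.ofReal_ofNat 4, ← ENNReal.ofReal_mul (by norm_num)]
    refine ENNReal.ofReal_le_ofReal ?_
    calc momentumOf ρ v t i j ^ 2 = v t i j ^ 2 * thetaA (ρ t) i j * thetaA (ρ t) i j := by
          simp only [momentumOf]; ring
      _ ≤ v t i j ^ 2 * thetaA (ρ t) i j :=
          mul_le_of_le_one_right (mul_nonneg (sq_nonneg _) h0) h1
      _ ≤ _ := le_four_mul_energy_integrand
          (fun i j _ => mul_nonneg (sq_nonneg _) ((hprob t ht).thetaA_nonneg i j)) hij
  · simp [momentumOf, (hvf t).2 i j hij]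

lemma VFeasible.feasible_momentumOf {v : ℝ → Fin N → Fin N → ℝ}
    (hp : VFeasible E Sg wd ρa ρb ρ v) : Feasible E Sg wd ρa ρb ρ (momentumOf ρ v) := by
  have hmv : ∀ᵐ t ∂volume.restrict (Set.Icc (0 : ℝ) 1),
      ∀ i j, E i j → momentumOf ρ v t i j = -(v t i j * thetaA (ρ t) i j) :=
    ae_of_all _ fun _ _ _ _ => rfl
  have hL2 := hp.memLp_momentumOf
  obtain ⟨hc, hprob, h0, h1, hvf, -, -, hII, hρ⟩ := hp
  exact ⟨hc, hprob, h0, h1, fun t => (hvf t).momentumOf, hL2,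
    fun i => (intervalIntegrable_momentumFlux_iff hmv i).2 (hII i),
    fun i => (momentumFlux_continuityEq_iff hmv i).2 (hρ i)⟩

lemma Feasible.ae_thetaA_pos_or_eq_zero {m : ℝ → Fin N → Fin N → ℝ}
    (hq : Feasible E Sg wd ρa ρb ρ m) (htop : action E ρ m ≠ ⊤) :
    ∀ᵐ t ∂volume.restrict (Set.Icc (0 : ℝ) 1),
      ∀ i j, E i j → 0 < thetaA (ρ t) i j ∨ m t i j = 0 := by
  obtain ⟨hc, hprob, -, -, -, hL2, -, -⟩ := hq
  have hmeas : AEMeasurable (fun t => (1 / 4 : ℝ≥0∞) *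
      ∑ i, ∑ j, if E i j then Lcost (thetaA (ρ t) i j) (m t i j) else 0)
      (volume.restrict (Set.Icc (0 : ℝ) 1)) := by
    refine .const_mul (Finset.aemeasurable_fun_sum _ fun i _ =>
      Finset.aemeasurable_fun_sum _ fun j _ => ?_) _
    split_ifs
    · exact measurable_Lcost.comp_aemeasurable
        (((hc.thetaA i j).aemeasurable measurableSet_Icc).prodMk (hL2 i j).1.aemeasurable)
    · exact aemeasurable_const
  filter_upwards [ae_lt_top' hmeas htop, ae_restrict_mem measurableSet_Icc] with t hfin ht i j hij
  refine pos_or_eq_zero_of_Lcost_ne_top ((hprob t ht).thetaA_nonneg i j) fun hL => ?_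
  have hsum : (∑ i, ∑ j, if E i j then Lcost (thetaA (ρ t) i j) (m t i j) else 0) = ⊤ :=
    ENNReal.sum_eq_top.2 ⟨i, Finset.mem_univ i,
      ENNReal.sum_eq_top.2 ⟨j, Finset.mem_univ j, by rw [if_pos hij, hL]⟩⟩
  rw [hsum, ENNReal.mul_top (by norm_num)] at hfin
  exact lt_irrefl _ hfin

lemma Feasible.vFeasible_velocityOf {m : ℝ → Fin N → Fin N → ℝ}
    (hq : Feasible E Sg wd ρa ρb ρ m) (htop : action E ρ m ≠ ⊤) :
    VFeasible E Sg wd ρa ρb ρ (velocityOf ρ m) := by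
  have hmv : ∀ᵐ t ∂volume.restrict (Set.Icc (0 : ℝ) 1),
      ∀ i j, E i j → m t i j = -(velocityOf ρ m t i j * thetaA (ρ t) i j) :=
    (hq.ae_thetaA_pos_or_eq_zero htop).mono fun t ht i j hij =>
      (neg_neg_div_mul_cancel_of_pos_or_eq_zero (ht i j hij)).symm
  obtain ⟨hc, hprob, h0, h1, hvf, hL2, hII, hρ⟩ := hq
  refine ⟨hc, hprob, h0, h1, fun t => (hvf t).velocityOf, fun i j => ?_,
    (energyV_velocityOf_le hprob m).trans_lt htop.lt_top,
    fun i => (intervalIntegrable_momentumFlux_iff hmv i).1 (hII i),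
    fun i => (momentumFlux_continuityEq_iff hmv i).1 (hρ i)⟩
  exact ((hL2 i j).1.aemeasurable.neg.div
    ((hc.thetaA i j).aemeasurable measurableSet_Icc)).aestronglyMeasurable

end Graph

theorem velocity_momentum_equivalence_general
    (N : ℕ) (E : Fin N → Fin N → Prop) [DecidableRel E]
    (Sg : Fin N → ℝ) (wd : ℝ → ℝ)
    (ρa ρb : Fin N → ℝ) :
    (⨅ p : {p : (ℝ → Fin N → ℝ) × (ℝ → Fin N → Fin N → ℝ) //
        VFeasible E Sg wd ρa ρb p.1 p.2}, energyV E p.1.1 p.1.2)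
      = ⨅ q : {q : (ℝ → Fin N → ℝ) × (ℝ → Fin N → Fin N → ℝ) //
        Feasible E Sg wd ρa ρb q.1 q.2}, action E q.1.1 q.1.2 := by
  refine le_antisymm (le_iInf fun q => ?_) (le_iInf fun p => ?_)
  · obtain ⟨⟨ρ, m⟩, hq⟩ := q
    rcases eq_or_ne (action E ρ m) ⊤ with htop | htop
    · rw [htop]
      exact le_top
    · exact iInf_le_of_le ⟨(ρ, velocityOf ρ m), hq.vFeasible_velocityOf htop⟩
        (energyV_velocityOf_le hq.2.1 m)
  · obtain ⟨⟨ρ, v⟩, hp⟩ := p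
    exact iInf_le_of_le ⟨(ρ, momentumOf ρ v), hp.feasible_momentumOf⟩
      (action_momentumOf hp.2.1 v).le

/-- Equivalence of the velocity and momentum formulations of the Wong–Zakai
perturbed optimal control problem: the two infima coincide. -/
theorem velocity_momentum_equivalence
    (N : ℕ) (hN : 2 ≤ N) (E : Fin N → Fin N → Prop) [DecidableRel E]
    (hEsymm : ∀ i j, E i j ↔ E j i) (hEirr : ∀ i, ¬ E i i)
    (hconn : ∀ i j : Fin N, Relation.ReflTransGen (fun a b => E a b) i j)
    (Sg : Fin N → ℝ) (w wd : ℝ → ℝ) (hw : IsPWL w wd)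
    (ρa ρb : Fin N → ℝ) (hρa : ProbVec ρa) (hρb : ProbVec ρb) :
    (⨅ p : {p : (ℝ → Fin N → ℝ) × (ℝ → Fin N → Fin N → ℝ) //
        VFeasible E Sg wd ρa ρb p.1 p.2}, energyV E p.1.1 p.1.2)
      = ⨅ q : {q : (ℝ → Fin N → ℝ) × (ℝ → Fin N → Fin N → ℝ) //
        Feasible E Sg wd ρa ρb q.1 q.2}, action E q.1.1 q.1.2 :=
  velocity_momentum_equivalence_general N E Sg wd ρa ρb

end
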